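/- For every integer n ≥ 4, the number of cyclic permutations of length n avoiding all three cyclic patterns [1243], [1324], and [1342] equals 3; that is, #Av_n([1243],[1324],[1342]) = 3. -/

import Mathlib

/-- A sequence `σ` of length `n` (with distinct values) contains the pattern `π`
of length `k` if some subsequence of `σ` is order isomorphic to `π`. -/
def ContainsPat {n k : ℕ} (σ : Fin n → Fin n) (π : Fin k → ℕ) : Prop :=
  ∃ f : Fin k → Fin n, StrictMono f ∧ ∀ i j : Fin k, π i < π j ↔ σ (f i) < σ (f j)

/-- The rotation of the sequence `σ` starting at position `r`. -/
def rotSeq {n : ℕ} (σ : Fin n → Fin n) (r : Fin n) : Fin n → Fin n :=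
  fun i => σ (i + r)

/-- The cyclic permutation `[σ]` contains the cyclic pattern `[π]` if some
rotation of `σ` contains `π` linearly. -/
def CycContains {n k : ℕ} (σ : Fin n → Fin n) (π : Fin k → ℕ) : Prop :=
  ∃ r : Fin n, ContainsPat (rotSeq σ r) π

/-- The cyclic permutation `[σ]` avoids the cyclic pattern `[π]`. -/
def CycAvoids {n k : ℕ} (σ : Fin n → Fin n) (π : Fin k → ℕ) : Prop :=
  ¬ CycContains σ π

/-- The cyclic permutation `[σ]`, i.e. the set of all rotations of `σ`. -/
def CycClass {n : ℕ} (σ : Fin n → Fin n) : Set (Fin n → Fin n) :=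
  Set.range (rotSeq σ)

/-- The set of cyclic permutations (rotation classes) of length `n` all of whose
representatives are permutations and which satisfy the (rotation-invariant)
predicate `P`. -/
def AvClasses (n : ℕ) (P : (Fin n → Fin n) → Prop) : Set (Set (Fin n → Fin n)) :=
  { C | ∃ σ : Equiv.Perm (Fin n), C = CycClass ⇑σ ∧ P ⇑σ }

/-- The cyclic descent number: the number of indices `i` (mod `n`) with
`σ i > σ (i+1)`. -/
def cdes {n : ℕ} (σ : Fin n → Fin n) : ℕ :=
  (Finset.univ.filter fun i : Fin n =>
    σ ⟨(↑i + 1) % n, Nat.mod_lt _ i.pos⟩ < σ i).card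

/-- The cyclic peak number: the number of indices `i` (mod `n`) with
`σ (i-1) < σ i > σ (i+1)`. -/
def cpk {n : ℕ} (σ : Fin n → Fin n) : ℕ :=
  (Finset.univ.filter fun i : Fin n =>
    σ ⟨(↑i + (n - 1)) % n, Nat.mod_lt _ i.pos⟩ < σ i ∧
    σ ⟨(↑i + 1) % n, Nat.mod_lt _ i.pos⟩ < σ i).card

/-!
Rotate a permutation `σ` so that `σ 0 = 0`. As `0` is then the smallest entry, the patterns
`[1243]`, `[1324]`, `[1342]` read from position `0` forbid the linear patterns `132`, `213`, `231`
among `σ 1, …, σ (n-1)`, and `[1243]` read from a later position forbids `4312` as well.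
Avoiding `132` and `231` puts the maximum at position `1` or `n - 1`. At `n - 1`, avoiding `213`
makes `σ` increasing, so `σ` is the identity. At `1`, every triple after the maximum is monotone
(`312` being a `4312` with the maximum in front), so `σ` is monotone on `2, …, n-1`: this gives
`0, n-1, 1, …, n-2` or `0, n-1, …, 2, 1`. Conversely these three sequences avoid the patterns,
and for `n ≥ 4` they are distinct, each being the only rotation in its class that fixes `0`.
-/

open Function

theorem strictMonoOn_or_strictAntiOn_Ici {α β : Type*} [LinearOrder α] [LinearOrder β]
    {f : α → β} {a : α} (hf : Set.InjOn f (Set.Ici a))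
    (h : ∀ i j k, a ≤ i → i < j → j < k → (f i < f j ↔ f j < f k)) :
    StrictMonoOn f (Set.Ici a) ∨ StrictAntiOn f (Set.Ici a) := by
  have hne : ∀ {x}, a < x → f a ≠ f x := fun hx he =>
    hx.ne (hf (Set.mem_Ici.2 le_rfl) (Set.mem_Ici.2 hx.le) he)
  by_cases hup : ∃ x, a < x ∧ f a < f x
  · obtain ⟨x, hax, hx⟩ := hup
    have base : ∀ j, a < j → f a < f j := by
      intro j haj
      rcases lt_trichotomy j x with hjx | rfl | hxj
      · rcases (hne haj).lt_or_gt with hlt | hgt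
        · exact hlt
        · exact absurd ((h a j x le_rfl haj hjx).2 (hgt.trans hx)) hgt.asymm
      · exact hx
      · exact (h a x j le_rfl hax hxj).1 hx |>.trans' hx
    left
    intro i hi j _ hij
    rcases (Set.mem_Ici.1 hi).eq_or_lt with rfl | hai
    · exact base j hij
    · exact (h a i j le_rfl hai hij).1 (base i hai)
  · simp only [not_exists, not_and, not_lt] at hup
    have base : ∀ j, a < j → f j < f a := fun j haj => (hup j haj).lt_of_ne (hne haj).symm
    right
    intro i hi j hj hij
    rcases (Set.mem_Ici.1 hi).eq_or_lt with rfl | hai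
    · exact base j hij
    · refine (le_of_not_gt fun hlt => ?_).lt_of_ne fun he => hij.ne (hf hi hj he.symm)
      exact (base i hai).asymm ((h a i j le_rfl hai hij).2 hlt)

theorem Equiv.Perm.val_apply_eq_val_iff {n : ℕ} {τ : Equiv.Perm (Fin n)} {a b x : Fin n}
    (h : τ a = b) : (τ x : ℕ) = b ↔ (x : ℕ) = a := by
  rw [Fin.val_inj, Fin.val_inj, ← h, τ.injective.eq_iff]

section Patterns

variable {n k : ℕ} (σ : Fin n → Fin n)

theorem containsPat_iff_of_injective {π : Fin k → ℕ} (hπ : Injective π) :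
    ContainsPat σ π ↔
      ∃ f : Fin k → Fin n, StrictMono f ∧ ∀ i j, π i < π j → σ (f i) < σ (f j) := by
  refine exists_congr fun f => and_congr_right fun _ =>
    ⟨fun h i j => (h i j).1, fun h i j => ⟨h i j, fun hσ => ?_⟩⟩
  rcases lt_trichotomy (π i) (π j) with hlt | heq | hgt
  · exact hlt
  · exact absurd hσ (by rw [hπ heq]; exact lt_irrefl _)
  · exact absurd (h j i hgt) hσ.asymm

theorem containsPat_1243_iff : ContainsPat σ ![1,2,4,3] ↔
    ∃ a b c d, a < b ∧ b < c ∧ c < d ∧ σ a < σ b ∧ σ b < σ d ∧ σ d < σ c := by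
  rw [containsPat_iff_of_injective σ (by decide)]
  constructor
  · rintro ⟨f, hf, h⟩
    exact ⟨f 0, f 1, f 2, f 3, hf (by decide), hf (by decide), hf (by decide),
      h 0 1 (by decide), h 1 3 (by decide), h 3 2 (by decide)⟩
  · rintro ⟨a, b, c, d, hab, hbc, hcd, h₁, h₂, h₃⟩
    refine ⟨![a, b, c, d], Fin.strictMono_iff_lt_succ.2 fun i => ?_, fun i j => ?_⟩
    · fin_cases i <;> assumption
    · fin_cases i <;> fin_cases j <;> simp <;> order

theorem containsPat_1324_iff : ContainsPat σ ![1,3,2,4] ↔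
    ∃ a b c d, a < b ∧ b < c ∧ c < d ∧ σ a < σ c ∧ σ c < σ b ∧ σ b < σ d := by
  rw [containsPat_iff_of_injective σ (by decide)]
  constructor
  · rintro ⟨f, hf, h⟩
    exact ⟨f 0, f 1, f 2, f 3, hf (by decide), hf (by decide), hf (by decide),
      h 0 2 (by decide), h 2 1 (by decide), h 1 3 (by decide)⟩
  · rintro ⟨a, b, c, d, hab, hbc, hcd, h₁, h₂, h₃⟩
    refine ⟨![a, b, c, d], Fin.strictMono_iff_lt_succ.2 fun i => ?_, fun i j => ?_⟩
    · fin_cases i <;> assumption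
    · fin_cases i <;> fin_cases j <;> simp <;> order

theorem containsPat_1342_iff : ContainsPat σ ![1,3,4,2] ↔
    ∃ a b c d, a < b ∧ b < c ∧ c < d ∧ σ a < σ d ∧ σ d < σ b ∧ σ b < σ c := by
  rw [containsPat_iff_of_injective σ (by decide)]
  constructor
  · rintro ⟨f, hf, h⟩
    exact ⟨f 0, f 1, f 2, f 3, hf (by decide), hf (by decide), hf (by decide),
      h 0 3 (by decide), h 3 1 (by decide), h 1 2 (by decide)⟩
  · rintro ⟨a, b, c, d, hab, hbc, hcd, h₁, h₂, h₃⟩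
    refine ⟨![a, b, c, d], Fin.strictMono_iff_lt_succ.2 fun i => ?_, fun i j => ?_⟩
    · fin_cases i <;> assumption
    · fin_cases i <;> fin_cases j <;> simp <;> order

end Patterns

def CycAvoids1243_1324_1342 {n : ℕ} (σ : Fin n → Fin n) : Prop :=
  CycAvoids σ ![1,2,4,3] ∧ CycAvoids σ ![1,3,2,4] ∧ CycAvoids σ ![1,3,4,2]

section Rotation

variable {n : ℕ} [NeZero n] (σ : Fin n → Fin n)

theorem rotSeq_zero : rotSeq σ 0 = σ :=
  funext fun i => congrArg σ (add_zero i)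

theorem rotSeq_rotSeq (r s : Fin n) : rotSeq (rotSeq σ r) s = rotSeq σ (s + r) :=
  funext fun i => congrArg σ (add_assoc i s r)

theorem cycClass_rotSeq (r : Fin n) : CycClass (rotSeq σ r) = CycClass σ := by
  rw [CycClass, CycClass, ← (Equiv.addRight r).surjective.range_comp (rotSeq σ)]
  exact congrArg Set.range (funext fun s => rotSeq_rotSeq σ r s)

theorem cycContains_rotSeq_iff (r : Fin n) {k : ℕ} (π : Fin k → ℕ) :
    CycContains (rotSeq σ r) π ↔ CycContains σ π := by
  simp only [CycContains, rotSeq_rotSeq]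
  exact (Equiv.addRight r).surjective.exists (p := fun t => ContainsPat (rotSeq σ t) π) |>.symm

theorem cycAvoids1243_1324_1342_rotSeq_iff (r : Fin n) :
    CycAvoids1243_1324_1342 (rotSeq σ r) ↔ CycAvoids1243_1324_1342 σ := by
  simp only [CycAvoids1243_1324_1342, CycAvoids, cycContains_rotSeq_iff]

theorem eq_of_cycClass_eq {σ τ : Fin n → Fin n} (hσ : Injective σ) (hσ0 : σ 0 = 0)
    (hτ0 : τ 0 = 0) (h : CycClass σ = CycClass τ) : σ = τ := by
  obtain ⟨r, rfl⟩ : τ ∈ CycClass σ := h ▸ ⟨0, rotSeq_zero τ⟩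
  obtain rfl : r = 0 := hσ (by rw [hσ0, ← zero_add r]; exact hτ0)
  exact (rotSeq_zero σ).symm

theorem cycClass_ne_of_apply_ne {σ τ : Equiv.Perm (Fin n)} (hσ0 : σ 0 = 0) (hτ0 : τ 0 = 0)
    {x : Fin n} (hx : (σ x : ℕ) ≠ τ x) : CycClass ⇑σ ≠ CycClass ⇑τ :=
  fun h => hx (by rw [eq_of_cycClass_eq σ.injective hσ0 hτ0 h])

end Rotation

section Candidates

variable {n : ℕ}

/-- The sequence `0, n-1, 1, 2, …, n-2`. -/
def maxSecond (n : ℕ) [NeZero n] : Equiv.Perm (Fin n) :=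
  (Equiv.swap 0 1).trans (Equiv.subRight 1)

theorem maxSecond_val [NeZero n] (x : Fin n) :
    (maxSecond n x : ℕ) =
      if (x : ℕ) = 0 then 0 else if (x : ℕ) = 1 then n - 1 else x - 1 := by
  rcases Nat.lt_or_ge n 2 with hn | hn
  · have := (maxSecond n x).isLt
    rw [if_pos (by omega)]
    omega
  have hone : ((1 : Fin n) : ℕ) = 1 := Nat.mod_eq_of_lt hn
  simp only [maxSecond, Equiv.trans_apply, Equiv.subRight_apply]
  split_ifs with h0 h1
  · rw [show x = 0 from Fin.ext h0, Equiv.swap_apply_left, sub_self, Fin.val_zero]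
  · rw [show x = 1 from Fin.ext (h1.trans hone.symm), Equiv.swap_apply_right,
      Fin.coe_sub_iff_lt.2 (by rw [Fin.lt_def, hone, Fin.val_zero]; omega), Fin.val_zero, hone]
    omega
  · rw [Equiv.swap_apply_of_ne_of_ne (fun h => h0 (by rw [h, Fin.val_zero]))
      (fun h => h1 (by rw [h, hone])), Fin.coe_sub_iff_le.2 (by rw [Fin.le_def, hone]; omega),
      hone]

theorem maxSecond_add_val [NeZero n] (x r : Fin n) :
    ((x : ℕ) + r = 0 ∨ (x : ℕ) + r = n) ∧ (maxSecond n (x + r) : ℕ) = 0 ∨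
    ((x : ℕ) + r = 1 ∨ (x : ℕ) + r = n + 1) ∧ (maxSecond n (x + r) : ℕ) = n - 1 ∨
    2 ≤ (x : ℕ) + r ∧ (x : ℕ) + r < n ∧ (maxSecond n (x + r) : ℕ) = x + r - 1 ∨
    n + 2 ≤ (x : ℕ) + r ∧ (maxSecond n (x + r) : ℕ) = x + r - n - 1 := by
  have := x.isLt
  have := r.isLt
  rw [maxSecond_val, Fin.val_add_eq_ite]
  split_ifs <;> omega

theorem rotSeq_neg_one [NeZero n] :
    rotSeq ⇑(Equiv.neg (Fin n)) 1 = ⇑(Fin.revPerm : Equiv.Perm (Fin n)) := by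
  funext x
  apply Fin.ext
  rcases Nat.lt_or_ge n 2 with hn | hn
  · have := (Fin.revPerm x).isLt
    have := (rotSeq (⇑(Equiv.neg (Fin n))) 1 x).isLt
    omega
  have hone : ((1 : Fin n) : ℕ) = 1 := Nat.mod_eq_of_lt hn
  have := x.isLt
  simp only [rotSeq, Equiv.neg_apply, Fin.revPerm_apply, Fin.val_rev, Fin.val_neg, Fin.ext_iff,
    Fin.val_zero, Fin.val_add_eq_ite, hone]
  split_ifs <;> first | omega | contradiction

theorem cycAvoids_one : CycAvoids1243_1324_1342 ⇑(1 : Equiv.Perm (Fin n)) := by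
  simp only [CycAvoids1243_1324_1342, CycAvoids, CycContains, containsPat_1243_iff,
    containsPat_1324_iff, containsPat_1342_iff, not_exists, not_and]
  refine ⟨?_, ?_, ?_⟩ <;> intro r a b c d hab hbc hcd h₁ h₂ <;>
    simp only [rotSeq, Equiv.Perm.coe_one, id, Fin.lt_def, Fin.val_add_eq_ite] at * <;>
    split_ifs at * <;> omega

theorem cycAvoids_rev : CycAvoids1243_1324_1342 ⇑(Fin.revPerm : Equiv.Perm (Fin n)) := by
  simp only [CycAvoids1243_1324_1342, CycAvoids, CycContains, containsPat_1243_iff,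
    containsPat_1324_iff, containsPat_1342_iff, not_exists, not_and]
  refine ⟨?_, ?_, ?_⟩ <;> intro r a b c d hab hbc hcd h₁ h₂ <;>
    simp only [rotSeq, Fin.revPerm_apply, Fin.lt_def, Fin.val_rev, Fin.val_add_eq_ite] at * <;>
    split_ifs at * <;> omega

theorem cycAvoids_neg [NeZero n] : CycAvoids1243_1324_1342 ⇑(Equiv.neg (Fin n)) := by
  rw [← cycAvoids1243_1324_1342_rotSeq_iff _ 1, rotSeq_neg_one]
  exact cycAvoids_rev

theorem cycAvoids_maxSecond [NeZero n] : CycAvoids1243_1324_1342 ⇑(maxSecond n) := by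
  simp only [CycAvoids1243_1324_1342, CycAvoids, CycContains, containsPat_1243_iff,
    containsPat_1324_iff, containsPat_1342_iff, not_exists, not_and]
  refine ⟨?_, ?_, ?_⟩ <;> intro r a b c d hab hbc hcd h₁ h₂ <;>
    simp only [rotSeq, Fin.lt_def] at * <;>
    rcases maxSecond_add_val a r with ⟨_, ha⟩ | ⟨_, ha⟩ | ⟨_, _, ha⟩ | ⟨_, ha⟩ <;>
    rcases maxSecond_add_val b r with ⟨_, hb⟩ | ⟨_, hb⟩ | ⟨_, _, hb⟩ | ⟨_, hb⟩ <;>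
    rcases maxSecond_add_val c r with ⟨_, hc⟩ | ⟨_, hc⟩ | ⟨_, _, hc⟩ | ⟨_, hc⟩ <;>
    rcases maxSecond_add_val d r with ⟨_, hd⟩ | ⟨_, hd⟩ | ⟨_, _, hd⟩ | ⟨_, hd⟩ <;>
    omega

end Candidates

section Classification

variable {n : ℕ} [NeZero n] {τ : Equiv.Perm (Fin n)} {i j k l p x : Fin n}

theorem no_4312_of_cycAvoids_1243 {σ : Fin n → Fin n} (h : CycAvoids σ ![1,2,4,3]) (hij : i < j)
    (hjk : j < k) (hkl : k < l) (hkl' : σ k < σ l) (hlj : σ l < σ j) : ¬ σ j < σ i := by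
  intro hji
  have e₁ : ((l - k : Fin n) : ℕ) = l - k := Fin.sub_val_of_le hkl.le
  have e₂ : ((i - k : Fin n) : ℕ) = n + i - k := Fin.coe_sub_iff_lt.2 (hij.trans hjk)
  have e₃ : ((j - k : Fin n) : ℕ) = n + j - k := Fin.coe_sub_iff_lt.2 hjk
  refine h ⟨k, (containsPat_1243_iff _).2 ⟨k - k, l - k, i - k, j - k, ?_, ?_, ?_, ?_⟩⟩
  · rw [Fin.lt_def, sub_self, Fin.val_zero, e₁]; omega
  · rw [Fin.lt_def, e₁, e₂]; omega
  · rw [Fin.lt_def, e₂, e₃]; omega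
  · simpa only [rotSeq, sub_add_cancel] using ⟨hkl', hlj, hji⟩

theorem apply_zero_lt_of_pos (h0 : τ 0 = 0) (hi : 0 < i) : τ 0 < τ i := by
  rw [h0, Fin.pos_iff_ne_zero]
  exact fun h => hi.ne' (τ.injective (h.trans h0.symm))

theorem apply_lt_of_apply_eq_top (hp : τ p = ⊤) (hx : x ≠ p) : τ x < τ p :=
  hp ▸ lt_top_iff_ne_top.2 fun h => hx (τ.injective (h.trans hp.symm))

theorem no_132_of_cycAvoids_1243 (h : CycAvoids ⇑τ ![1,2,4,3]) (h0 : τ 0 = 0) (hi : 0 < i)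
    (hij : i < j) (hjk : j < k) (hik : τ i < τ k) : ¬ τ k < τ j := by
  refine fun hkj => h ⟨0, ?_⟩
  rw [rotSeq_zero]
  exact (containsPat_1243_iff _).2
    ⟨0, i, j, k, hi, hij, hjk, apply_zero_lt_of_pos h0 hi, hik, hkj⟩

theorem no_213_of_cycAvoids_1324 (h : CycAvoids ⇑τ ![1,3,2,4]) (h0 : τ 0 = 0) (hi : 0 < i)
    (hij : i < j) (hjk : j < k) (hji : τ j < τ i) : ¬ τ i < τ k := by
  refine fun hik => h ⟨0, ?_⟩
  rw [rotSeq_zero]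
  exact (containsPat_1324_iff _).2
    ⟨0, i, j, k, hi, hij, hjk, apply_zero_lt_of_pos h0 (hi.trans hij), hji, hik⟩

theorem no_231_of_cycAvoids_1342 (h : CycAvoids ⇑τ ![1,3,4,2]) (h0 : τ 0 = 0) (hi : 0 < i)
    (hij : i < j) (hjk : j < k) (hki : τ k < τ i) : ¬ τ i < τ j := by
  refine fun hij' => h ⟨0, ?_⟩
  rw [rotSeq_zero]
  exact (containsPat_1342_iff _).2
    ⟨0, i, j, k, hi, hij, hjk, apply_zero_lt_of_pos h0 ((hi.trans hij).trans hjk), hki, hij'⟩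

theorem symm_top_eq_one_or_top (hn : 3 ≤ n) (h0 : τ 0 = 0) (h1243 : CycAvoids ⇑τ ![1,2,4,3])
    (h1342 : CycAvoids ⇑τ ![1,3,4,2]) : τ.symm ⊤ = 1 ∨ τ.symm ⊤ = ⊤ := by
  have hone : ((1 : Fin n) : ℕ) = 1 := Nat.mod_eq_of_lt (by omega : 1 < n)
  set p := τ.symm ⊤
  have hp : τ p = ⊤ := τ.apply_symm_apply ⊤
  have hp0 : (p : ℕ) ≠ 0 := by
    have := Equiv.Perm.val_apply_eq_val_iff (x := p) h0
    rw [hp, Fin.val_top, Fin.val_zero] at this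
    omega
  refine or_iff_not_imp_left.2 fun hp1 => by_contra fun hpt => ?_
  have h01 : (0 : Fin n) < 1 := by rw [Fin.lt_def, hone, Fin.val_zero]; omega
  have h1p : 1 < p := by rw [Fin.lt_def, hone]; omega
  have hpt : p < ⊤ := lt_top_iff_ne_top.2 hpt
  rcases (τ.injective.ne (h1p.trans hpt).ne).lt_or_gt with h | h
  · exact no_132_of_cycAvoids_1243 h1243 h0 h01 h1p hpt h (apply_lt_of_apply_eq_top hp hpt.ne')
  · exact no_231_of_cycAvoids_1342 h1342 h0 h01 h1p hpt h (apply_lt_of_apply_eq_top hp h1p.ne)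

theorem strictMono_of_apply_top (h0 : τ 0 = 0) (htop : τ ⊤ = ⊤)
    (h1324 : CycAvoids ⇑τ ![1,3,2,4]) : StrictMono τ := by
  intro i j hij
  rcases (Fin.zero_le i).eq_or_lt with rfl | hi
  · exact apply_zero_lt_of_pos h0 hij
  rcases (le_top : j ≤ ⊤).eq_or_lt with rfl | hjt
  · exact apply_lt_of_apply_eq_top htop hij.ne
  · refine (τ.injective.ne hij.ne).lt_or_gt.resolve_right fun h => ?_
    exact no_213_of_cycAvoids_1324 h1324 h0 hi hij hjt h
      (apply_lt_of_apply_eq_top htop (hij.trans hjt).ne)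

theorem strictMonoOn_or_strictAntiOn_of_apply_one (hn : 3 ≤ n) (h0 : τ 0 = 0) (h1 : τ 1 = ⊤)
    (hτ : CycAvoids1243_1324_1342 ⇑τ) :
    StrictMonoOn τ (Set.Ici 2) ∨ StrictAntiOn τ (Set.Ici 2) := by
  obtain ⟨h1243, h1324, h1342⟩ := hτ
  have hone : ((1 : Fin n) : ℕ) = 1 := Nat.mod_eq_of_lt (by omega : 1 < n)
  have htwo : ((2 : Fin n) : ℕ) = 2 := Nat.mod_eq_of_lt (by omega : 2 < n)
  refine strictMonoOn_or_strictAntiOn_Ici τ.injective.injOn fun i j k h2i hij hjk => ?_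
  have h1i : 1 < i := by
    rw [Fin.le_def, htwo] at h2i
    rw [Fin.lt_def, hone]; omega
  have h0i : 0 < i := lt_of_le_of_lt (Fin.zero_le 1) h1i
  constructor
  · intro hτij
    refine (τ.injective.ne hjk.ne).lt_or_gt.resolve_right fun hτkj => ?_
    rcases (τ.injective.ne (hij.trans hjk).ne).lt_or_gt with h | h
    · exact no_132_of_cycAvoids_1243 h1243 h0 h0i hij hjk h hτkj
    · exact no_231_of_cycAvoids_1342 h1342 h0 h0i hij hjk h hτij
  · intro hτjk
    refine (τ.injective.ne hij.ne).lt_or_gt.resolve_right fun hτji => ?_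
    rcases (τ.injective.ne (hij.trans hjk).ne).lt_or_gt with h | h
    · exact no_213_of_cycAvoids_1324 h1324 h0 h0i hij hjk hτji h
    · exact no_4312_of_cycAvoids_1243 h1243 h1i hij hjk hτjk h
        (apply_lt_of_apply_eq_top h1 h1i.ne')

theorem eq_neg_of_strictAntiOn (hn : 3 ≤ n) (h0 : τ 0 = 0) (h1 : τ 1 = ⊤)
    (hτ : StrictAntiOn τ (Set.Ici 2)) : τ = Equiv.neg (Fin n) := by
  have hone : ((1 : Fin n) : ℕ) = 1 := Nat.mod_eq_of_lt (by omega : 1 < n)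
  have htwo : ((2 : Fin n) : ℕ) = 2 := Nat.mod_eq_of_lt (by omega : 2 < n)
  have hmem : ∀ x : Fin n, 2 ≤ (x : ℕ) → x ∈ Set.Ici 2 := fun x hx => by
    rwa [Set.mem_Ici, Fin.le_def, htwo]
  have hmono : StrictMono fun x => -τ x := by
    intro i j hij
    have hi₀ := τ.val_apply_eq_val_iff (x := i) h0
    have hj₀ := τ.val_apply_eq_val_iff (x := j) h0
    have hi₁ := τ.val_apply_eq_val_iff (x := i) h1
    have hj₁ := τ.val_apply_eq_val_iff (x := j) h1
    have hanti : 2 ≤ (i : ℕ) → (τ j : ℕ) < τ i := fun h2i =>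
      hτ (hmem i h2i) (hmem j (by omega)) hij
    simp only [Fin.val_zero, Fin.val_top, hone] at hi₀ hj₀ hi₁ hj₁
    simp only [Fin.lt_def, Fin.val_neg, Fin.ext_iff, Fin.val_zero] at hij ⊢
    split_ifs <;> omega
  refine Equiv.ext fun x => ?_
  rw [Equiv.neg_apply, ← neg_eq_iff_eq_neg]
  exact congrFun hmono.eq_id x

theorem eq_maxSecond_of_strictMonoOn (hn : 3 ≤ n) (h0 : τ 0 = 0) (h1 : τ 1 = ⊤)
    (hτ : StrictMonoOn τ (Set.Ici 2)) : τ = maxSecond n := by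
  have hone : ((1 : Fin n) : ℕ) = 1 := Nat.mod_eq_of_lt (by omega : 1 < n)
  have htwo : ((2 : Fin n) : ℕ) = 2 := Nat.mod_eq_of_lt (by omega : 2 < n)
  have hmem : ∀ x : Fin n, 2 ≤ (x : ℕ) → x ∈ Set.Ici 2 := fun x hx => by
    rwa [Set.mem_Ici, Fin.le_def, htwo]
  have hmono : StrictMono fun x => (maxSecond n).symm (τ x) := by
    intro i j hij
    have hi := maxSecond_val ((maxSecond n).symm (τ i))
    have hj := maxSecond_val ((maxSecond n).symm (τ j))
    have hi₀ := τ.val_apply_eq_val_iff (x := i) h0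
    have hj₀ := τ.val_apply_eq_val_iff (x := j) h0
    have hi₁ := τ.val_apply_eq_val_iff (x := i) h1
    have hj₁ := τ.val_apply_eq_val_iff (x := j) h1
    have hlt : 2 ≤ (i : ℕ) → (τ i : ℕ) < τ j := fun h2i =>
      hτ (hmem i h2i) (hmem j (by omega)) hij
    have := ((maxSecond n).symm (τ i)).isLt
    have := ((maxSecond n).symm (τ j)).isLt
    simp only [Equiv.apply_symm_apply] at hi hj
    simp only [Fin.val_zero, Fin.val_top, hone] at hi₀ hj₀ hi₁ hj₁
    simp only [Fin.lt_def] at hij ⊢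
    split_ifs at hi hj <;> omega
  refine Equiv.ext fun x => ?_
  exact (Equiv.symm_apply_eq _).1 (congrFun hmono.eq_id x)

theorem eq_one_or_neg_or_maxSecond_of_cycAvoids (hn : 3 ≤ n) (h0 : τ 0 = 0)
    (hτ : CycAvoids1243_1324_1342 ⇑τ) :
    τ = 1 ∨ τ = Equiv.neg (Fin n) ∨ τ = maxSecond n := by
  rcases symm_top_eq_one_or_top hn h0 hτ.1 hτ.2.2 with h1 | htop
  · have h1 : τ 1 = ⊤ := by rw [← h1, τ.apply_symm_apply]
    rcases strictMonoOn_or_strictAntiOn_of_apply_one hn h0 h1 hτ with hmono | hanti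
    · exact Or.inr (Or.inr (eq_maxSecond_of_strictMonoOn hn h0 h1 hmono))
    · exact Or.inr (Or.inl (eq_neg_of_strictAntiOn hn h0 h1 hanti))
  · have htop : τ ⊤ = ⊤ := ((Equiv.symm_apply_eq τ).1 htop).symm
    exact Or.inl (Equiv.ext fun x => congrFun (strictMono_of_apply_top h0 htop hτ.2.1).eq_id x)

end Classification

theorem avClasses_cycAvoids1243_1324_1342 {n : ℕ} [NeZero n] (hn : 3 ≤ n) :
    AvClasses n CycAvoids1243_1324_1342 = {CycClass ⇑(1 : Equiv.Perm (Fin n)),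
      CycClass ⇑(Equiv.neg (Fin n)), CycClass ⇑(maxSecond n)} := by
  ext C
  constructor
  · rintro ⟨σ, rfl, hσ⟩
    set τ : Equiv.Perm (Fin n) := (Equiv.addRight (σ.symm 0)).trans σ
    have hτσ : ⇑τ = rotSeq σ (σ.symm 0) := rfl
    have h0 : τ 0 = 0 := by simp [τ]
    have hτ : CycAvoids1243_1324_1342 ⇑τ :=
      hτσ ▸ (cycAvoids1243_1324_1342_rotSeq_iff _ _).2 hσ
    rw [← cycClass_rotSeq σ (σ.symm 0), ← hτσ]
    rcases eq_one_or_neg_or_maxSecond_of_cycAvoids hn h0 hτ with h | h | h <;> simp [h]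
  · rintro (rfl | rfl | rfl)
    · exact ⟨1, rfl, cycAvoids_one⟩
    · exact ⟨Equiv.neg (Fin n), rfl, cycAvoids_neg⟩
    · exact ⟨maxSecond n, rfl, cycAvoids_maxSecond⟩

theorem card_av_1243_1324_1342 (n : ℕ) (hn : 4 ≤ n) :
    (AvClasses n fun σ => CycAvoids σ ![1,2,4,3] ∧ CycAvoids σ ![1,3,2,4] ∧ CycAvoids σ ![1,3,4,2]).ncard = 3 := by
  have : NeZero n := ⟨by omega⟩
  have hone : ((1 : Fin n) : ℕ) = 1 := Nat.mod_eq_of_lt (by omega : 1 < n)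
  have htwo : ((2 : Fin n) : ℕ) = 2 := Nat.mod_eq_of_lt (by omega : 2 < n)
  have hneg0 : Equiv.neg (Fin n) 0 = 0 := neg_zero
  have hmax0 : maxSecond n 0 = 0 :=
    Fin.ext (by rw [maxSecond_val, if_pos (Fin.val_zero n), Fin.val_zero])
  refine Set.ncard_eq_three.2 ⟨_, _, _, cycClass_ne_of_apply_ne (x := 1) rfl hneg0 ?_,
    cycClass_ne_of_apply_ne (x := 1) rfl hmax0 ?_, cycClass_ne_of_apply_ne (x := 2) hneg0 hmax0 ?_,
    avClasses_cycAvoids1243_1324_1342 (by omega)⟩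
  all_goals simp only [Equiv.Perm.coe_one, id, Equiv.neg_apply, Fin.val_neg, maxSecond_val,
    Fin.ext_iff, Fin.val_zero, hone, htwo]
  all_goals simp only [one_ne_zero, OfNat.ofNat_ne_zero, OfNat.ofNat_ne_one, if_false, if_true]
  all_goals omega
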